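/- arXiv:2111.05768 — 2 statements merged into one kernel-verified Lean document; each statement's English description precedes it below -/
import Mathlib

section
/- For all real numbers a, b ≥ 0, η₁, η₂ ≥ 0, and q > 1: (b − a)(η₂² b^{q−1} − η₁² a^{q−1}) ≥ ((q−1)/(32q²)) · (η₂ b^{q/2} − η₁ a^{q/2})² − 2·max{1, (q−1)^{−1}} · (η₂ − η₁)² · (b^q + a^q). -/
/-!
Assume `a ≤ b` (the inequality is symmetric under `(a, η₁) ↔ (b, η₂)`) and write `A = a^(q/2)`,
`B = b^(q/2)`, `M = max 1 (q-1)⁻¹`. Two facts about powers carry the proof: the tangent-line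
bound `q (b - a) a^(q-1) ≤ b^q - a^q`, and `2 (B - A)² ≤ q M (b - a)(b^(q-1) - a^(q-1))`, which
is `s (v - u)² ≤ (v^s - u^s)(v^(2-s) - u^(2-s))` at `u = A`, `v = B` for whichever of `s = 2/q`,
`s = 2 - 2/q` lies in `[0, 1]`. What remains is a polynomial inequality, proved by completing
squares separately for `η₁ ≤ η₂` and `η₂ ≤ η₁`; it holds with any `K ≥ 0` such that
`2 K q M ≤ 1` in place of `(q-1)/(32q²)`.
-/

open Real

theorem mul_sq_sub_le_rpow_sub_mul_rpow_sub {u v s : ℝ} (hu : 0 ≤ u) (huv : u ≤ v)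
    (hs₀ : 0 ≤ s) (hs₁ : s ≤ 1) :
    s * (v - u) ^ 2 ≤ (v ^ s - u ^ s) * (v ^ (2 - s) - u ^ (2 - s)) := by
  have hv : 0 ≤ v := hu.trans huv
  have amgm : u ^ s * v ^ (1 - s) ≤ s * u + (1 - s) * v :=
    geom_mean_le_arith_mean2_weighted hs₀ (by linarith) hu hv (by ring)
  have split_two_sub (x : ℝ) (hx : 0 ≤ x) : x ^ (2 - s) = x * x ^ (1 - s) := by
    rw [show 2 - s = 1 + (1 - s) by ring, rpow_add' hx (by linarith), rpow_one]
  have hv_eq : v ^ s * v ^ (1 - s) = v := by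
    rw [← rpow_add' hv (by norm_num), add_sub_cancel, rpow_one]
  have hvu_pow : 0 ≤ v ^ s - u ^ s := sub_nonneg.2 (rpow_le_rpow hu huv hs₀)
  have hvu_pow_two_sub : v ^ (1 - s) * (v - u) ≤ v ^ (2 - s) - u ^ (2 - s) := by
    have := rpow_le_rpow hu huv (sub_nonneg.2 hs₁)
    rw [split_two_sub v hv, split_two_sub u hu]
    linear_combination u * this
  calc s * (v - u) ^ 2 ≤ (v - u ^ s * v ^ (1 - s)) * (v - u) := by
        linear_combination (v - u) * amgm
    _ = (v ^ s - u ^ s) * (v ^ (1 - s) * (v - u)) := by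
        linear_combination (v - u) * hv_eq.symm
    _ ≤ (v ^ s - u ^ s) * (v ^ (2 - s) - u ^ (2 - s)) :=
        mul_le_mul_of_nonneg_left hvu_pow_two_sub hvu_pow

theorem mul_sub_mul_rpow_sub_one_le_rpow_sub_rpow {a b q : ℝ} (ha : 0 ≤ a) (hb : 0 ≤ b)
    (hq : 1 ≤ q) : q * (b - a) * a ^ (q - 1) ≤ b ^ q - a ^ q := by
  have hq₀ : q ≠ 0 := by positivity
  have amgm := geom_mean_le_arith_mean2_weighted (inv_nonneg.2 (zero_le_one.trans hq))
    (sub_nonneg.2 (inv_le_one_of_one_le₀ hq)) (rpow_nonneg hb q) (rpow_nonneg ha q)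
    (add_sub_cancel q⁻¹ 1)
  rw [rpow_rpow_inv hb hq₀, ← rpow_mul ha, mul_one_sub, mul_inv_cancel₀ hq₀] at amgm
  have ha_eq : a * a ^ (q - 1) = a ^ q := by
    rw [← rpow_one_add' ha (by simpa using hq₀), add_sub_cancel]
  linear_combination q * amgm - q * ha_eq + (b ^ q - a ^ q) * mul_inv_cancel₀ hq₀

theorem two_mul_sq_rpow_half_sub_le {a b q : ℝ} (ha : 0 ≤ a) (hab : a ≤ b) (hq : 1 < q) :
    2 * (b ^ (q / 2) - a ^ (q / 2)) ^ 2 ≤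
      q * max 1 (q - 1)⁻¹ * ((b - a) * (b ^ (q - 1) - a ^ (q - 1))) := by
  have hq₀ : 0 < q := by linarith
  have hq₁ : q - 1 ≠ 0 := by linarith
  have hb := ha.trans hab
  have hpow (x : ℝ) (hx : 0 ≤ x) (t : ℝ) : (x ^ (q / 2)) ^ t = x ^ (q / 2 * t) :=
    (rpow_mul hx _ _).symm
  have huv : a ^ (q / 2) ≤ b ^ (q / 2) := rpow_le_rpow ha hab (by positivity)
  set u := a ^ (q / 2)
  set v := b ^ (q / 2)
  rcases le_total q 2 with hq2 | hq2
  · have h := mul_sq_sub_le_rpow_sub_mul_rpow_sub (rpow_nonneg ha _) huv (s := 2 - 2 / q)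
      (by rw [sub_nonneg, div_le_iff₀ hq₀]; linarith)
      (by rw [sub_le_comm, le_div_iff₀ hq₀]; linarith)
    rw [hpow a ha, hpow b hb, hpow a ha, hpow b hb, show q / 2 * (2 - 2 / q) = q - 1 by
      field_simp, show q / 2 * (2 - (2 - 2 / q)) = 1 by field_simp; ring, rpow_one,
      rpow_one] at h
    rw [max_eq_right (one_le_inv₀ (by linarith) |>.2 (by linarith))]
    calc 2 * (v - u) ^ 2 = q * (q - 1)⁻¹ * ((2 - 2 / q) * (v - u) ^ 2) := by field_simp
      _ ≤ q * (q - 1)⁻¹ * ((b - a) * (b ^ (q - 1) - a ^ (q - 1))) :=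
          mul_le_mul_of_nonneg_left (by linarith) (by positivity)
  · have h := mul_sq_sub_le_rpow_sub_mul_rpow_sub (rpow_nonneg ha _) huv (s := 2 / q)
      (by positivity) (by rw [div_le_iff₀ hq₀]; linarith)
    rw [hpow a ha, hpow b hb, hpow a ha, hpow b hb, show q / 2 * (2 / q) = 1 by field_simp,
      show q / 2 * (2 - 2 / q) = q - 1 by field_simp, rpow_one, rpow_one] at h
    rw [max_eq_left (inv_le_one_of_one_le₀ (by linarith))]
    calc 2 * (v - u) ^ 2 = q * 1 * (2 / q * (v - u) ^ 2) := by field_simp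
      _ ≤ q * 1 * ((b - a) * (b ^ (q - 1) - a ^ (q - 1))) :=
          mul_le_mul_of_nonneg_left h (by positivity)

theorem lower_bound_sq_mul_sub_sq_mul_of_le {A B X Y η₁ η₂ q M K : ℝ} (hX : 0 ≤ X)
    (hη₁ : 0 ≤ η₁) (hη : η₁ ≤ η₂) (hM : 1 ≤ M) (hMq : 1 ≤ M * (q - 1)) (hK₀ : 0 ≤ K)
    (hK : 2 * K * (q * M) ≤ 1) (hD : 2 * (B - A) ^ 2 ≤ q * M * (Y - X)) :
    K * (η₂ * B - η₁ * A) ^ 2 - 2 * M * (η₂ - η₁) ^ 2 * (B ^ 2 + A ^ 2) ≤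
      η₂ ^ 2 * Y - η₁ ^ 2 * X := by
  have hqM : 1 ≤ q * M := by nlinarith
  have hYX : 2 * K * (B - A) ^ 2 ≤ Y - X := by nlinarith
  have hKM : K ≤ M := by nlinarith
  have hY : 0 ≤ (η₂ ^ 2 - η₁ ^ 2) * Y := mul_nonneg (by nlinarith) (by nlinarith)
  nlinarith [mul_le_mul_of_nonneg_left hYX (sq_nonneg η₁),
    mul_nonneg hK₀ (sq_nonneg (η₁ * (B - A) - (η₂ - η₁) * B)),
    mul_nonneg (sub_nonneg.2 hKM) (sq_nonneg ((η₂ - η₁) * B)),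
    mul_nonneg (hK₀.trans hKM) (sq_nonneg ((η₂ - η₁) * A))]

theorem lower_bound_sq_mul_sub_sq_mul_of_ge {A B X Y η₁ η₂ q M K : ℝ} (hη₂ : 0 ≤ η₂)
    (hη : η₂ ≤ η₁) (hM : 1 ≤ M) (hMq : 1 ≤ M * (q - 1)) (hK₀ : 0 ≤ K)
    (hK : 2 * K * (q * M) ≤ 1) (hX : q * X ≤ B ^ 2 - A ^ 2)
    (hD : 2 * (B - A) ^ 2 ≤ q * M * (Y - X)) :
    K * (η₂ * B - η₁ * A) ^ 2 - 2 * M * (η₂ - η₁) ^ 2 * (B ^ 2 + A ^ 2) ≤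
      η₂ ^ 2 * Y - η₁ ^ 2 * X := by
  obtain ⟨δ, hδ, rfl⟩ : ∃ δ, 0 ≤ δ ∧ η₁ = η₂ + δ := ⟨η₁ - η₂, by linarith, by ring⟩
  have hP : 0 < q * M := by nlinarith
  refine le_of_mul_le_mul_left ?_ hP
  have hcross : 2 * M * η₂ * δ * (q * X) ≤
      η₂ ^ 2 * (B - A) ^ 2 + M ^ 2 * δ ^ 2 * (B + A) ^ 2 := by
    nlinarith [mul_le_mul_of_nonneg_left hX (by positivity : 0 ≤ 2 * M * η₂ * δ),
      sq_nonneg (η₂ * (B - A) - M * δ * (B + A))]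
  nlinarith [mul_le_mul_of_nonneg_left hD (sq_nonneg η₂),
    mul_le_mul_of_nonneg_left hX (by positivity : 0 ≤ M * δ ^ 2),
    mul_nonneg (mul_nonneg hP.le hK₀) (sq_nonneg (η₂ * (B - A) + δ * A)),
    mul_nonneg (sq_nonneg (M * δ)) (sq_nonneg (B - A)),
    mul_nonneg (sub_nonneg.2 hK) (sq_nonneg (η₂ * (B - A))),
    mul_le_mul_of_nonneg_left hMq (by positivity : 0 ≤ 2 * M * δ ^ 2 * B ^ 2),
    mul_le_mul_of_nonneg_left hMq (by positivity : 0 ≤ 2 * M * δ ^ 2 * A ^ 2),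
    mul_nonneg (by nlinarith : 0 ≤ M * (1 - 2 * q * K)) (sq_nonneg (δ * A))]

theorem max_one_inv_sub_one_mul_sub_one {q : ℝ} (hq : 1 < q) :
    max 1 (q - 1)⁻¹ * (q - 1) = max (q - 1) 1 := by
  rw [max_mul_of_nonneg _ _ (by linarith), one_mul, inv_mul_cancel₀ (by linarith)]

theorem two_mul_div_mul_max_one_inv_sub_one_le_one {q : ℝ} (hq : 1 < q) :
    2 * ((q - 1) / (32 * q ^ 2)) * (q * max 1 (q - 1)⁻¹) ≤ 1 := by
  have : max 1 (q - 1)⁻¹ * (q - 1) ≤ q :=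
    max_one_inv_sub_one_mul_sub_one hq ▸ max_le (by linarith) (by linarith)
  rw [show 2 * ((q - 1) / (32 * q ^ 2)) * (q * max 1 (q - 1)⁻¹) =
    max 1 (q - 1)⁻¹ * (q - 1) / (16 * q) by field_simp; ring, div_le_one (by positivity)]
  linarith

/-- Algebraic inequality (Lemma 3.7 in Kassmann '07). All powers are real powers. -/
theorem algebraic_inequality_three (a b η₁ η₂ q : ℝ) (ha : 0 ≤ a) (hb : 0 ≤ b)
    (hη₁ : 0 ≤ η₁) (hη₂ : 0 ≤ η₂) (hq : 1 < q) :
    (q - 1) / (32 * q ^ 2) * (η₂ * b ^ (q / 2) - η₁ * a ^ (q / 2)) ^ 2 -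
        2 * max 1 (q - 1)⁻¹ * (η₂ - η₁) ^ 2 * (b ^ q + a ^ q) ≤
      (b - a) * (η₂ ^ 2 * b ^ (q - 1) - η₁ ^ 2 * a ^ (q - 1)) := by
  wlog hab : a ≤ b generalizing a b η₁ η₂
  · linear_combination this b a η₂ η₁ hb ha hη₂ hη₁ (le_of_not_ge hab)
  have hM : 1 ≤ max 1 (q - 1)⁻¹ := le_max_left _ _
  have hMq : 1 ≤ max 1 (q - 1)⁻¹ * (q - 1) :=
    max_one_inv_sub_one_mul_sub_one hq ▸ le_max_right _ _
  have hK := two_mul_div_mul_max_one_inv_sub_one_le_one hq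
  have hK₀ : 0 ≤ (q - 1) / (32 * q ^ 2) := div_nonneg (by linarith) (by positivity)
  have hsq (x : ℝ) (hx : 0 ≤ x) : (x ^ (q / 2)) ^ 2 = x ^ q := by
    rw [← rpow_natCast, ← rpow_mul hx]; norm_num
  have hX := mul_sub_mul_rpow_sub_one_le_rpow_sub_rpow ha hb hq.le
  have hD := two_mul_sq_rpow_half_sub_le ha hab hq
  rw [← hsq a ha, ← hsq b hb] at hX ⊢
  rcases le_total η₁ η₂ with hη | hη
  · linear_combination lower_bound_sq_mul_sub_sq_mul_of_le (A := a ^ (q / 2))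
      (B := b ^ (q / 2)) (X := (b - a) * a ^ (q - 1)) (Y := (b - a) * b ^ (q - 1))
      (mul_nonneg (by linarith) (rpow_nonneg ha _)) hη₁ hη hM hMq hK₀ hK
      (by linear_combination hD)
  · linear_combination lower_bound_sq_mul_sub_sq_mul_of_ge (A := a ^ (q / 2))
      (B := b ^ (q / 2)) (X := (b - a) * a ^ (q - 1)) (Y := (b - a) * b ^ (q - 1))
      hη₂ hη hM hMq hK₀ hK (by linear_combination hX) (by linear_combination hD)
end

section
/- For all real numbers a, b, x, y: (b − a)(b y² − a x²) ≥ (1/4)(b − a)²(y² + x²) − 4(b² + a²)(y − x)². -/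
/-!
Write `b y² - a x² = ½ (b - a)(y² + x²) + ½ (b + a)(y² - x²)`. Multiplied by `b - a`, the first
term gives `½ (b - a)² (y² + x²)`, and the cross term `½ u v` with `u = (b - a)(y + x)`,
`v = (b + a)(y - x)` is bounded below by Young's inequality `u v ≥ -(u² / 4 + v²)`; half of the
main term absorbs `u² / 8`, and `v² / 2 ≤ (b² + a²)(y - x)²`.
-/

/-- Algebraic inequality for real numbers. -/
theorem algebraic_inequality_four (a b x y : ℝ) :
    1 / 4 * (b - a) ^ 2 * (y ^ 2 + x ^ 2) - 4 * (b ^ 2 + a ^ 2) * (y - x) ^ 2 ≤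
      (b - a) * (b * y ^ 2 - a * x ^ 2) := by
  set u := (b - a) * (y + x)
  set v := (b + a) * (y - x)
  have hsplit : (b - a) * (b * y ^ 2 - a * x ^ 2) =
      (b - a) ^ 2 * (y ^ 2 + x ^ 2) / 2 + u * v / 2 := by ring
  have hyoung : -u * v ≤ u ^ 2 / 4 + v ^ 2 := by
    linarith [two_mul_le_add_sq (u / 2) (-v)]
  have hu : u ^ 2 ≤ (b - a) ^ 2 * (2 * (y ^ 2 + x ^ 2)) := by
    rw [mul_pow]; gcongr; exact add_sq_le
  have hv : v ^ 2 ≤ 2 * (b ^ 2 + a ^ 2) * (y - x) ^ 2 := by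
    rw [mul_pow]; gcongr; exact add_sq_le
  have hnonneg : 0 ≤ (b ^ 2 + a ^ 2) * (y - x) ^ 2 := by positivity
  linarith
end
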